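/- Let H be a real Hilbert space, D a dense linear subspace of H, and E : D × D → ℝ a symmetric non-negative definite bilinear form which is closed (i.e., if (u_n) ⊆ D converges in H to u and E(u_n − u_m, u_n − u_m) → 0 as n,m → ∞, then u ∈ D and E(u_n − u, u_n − u) → 0). Let (P_t)_{t>0} be the strongly continuous contraction semigroup on H associated with E, and (G_δ)_{δ>0} the associated strongly continuous resolvent, satisfying G_δ(u) = ∫_0^∞ e^{−δt} P_t(u) dt (Bochner integral), G_δ(u) ∈ D, and E(G_δ(u), v) + δ⟨G_δ(u), v⟩ = ⟨u, v⟩ for all δ > 0, u ∈ H, v ∈ D. Suppose there exist a closed linear subspace H₀ ⊆ H and C_P > 0 such that ‖P_t(u)‖ ≤ e^{−t/C_P}‖u‖ for all t > 0 and u ∈ H₀. Define G_{0⁺}(u) = ∫_0^∞ P_t(u) dt for u ∈ H₀ (Bochner integral, which converges). Then for every u ∈ H₀: (1) G_{0⁺}(u) ∈ D; (2) E(G_{0⁺}(u), v) = ⟨u, v⟩ for all v ∈ D; (3) E(G_{0⁺}(u), G_{0⁺}(u)) ≤ C_P ‖u‖². -/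
import Mathlib


open MeasureTheory Filter Set
open scoped RealInnerProductSpace ENNReal Topology

set_option maxHeartbeats 1000000

noncomputable section

/-- Existence of Stein-kernel-type solutions via Dirichlet forms (`thm:abstract`):
given a closed symmetric non-negative definite bilinear form `Ef` on a dense subspace `D`
of a real Hilbert space `H`, with associated strongly continuous contraction semigroup
`(P_t)` and resolvent `(G_δ)`, and a closed subspace `H₀` on which the semigroup decays
exponentially with rate `1/C_P`, the potential operator `G_{0⁺}u = ∫_0^∞ P_t u dt`
converges, lands in `D`, satisfies `E(G_{0⁺}u, v) = ⟨u, v⟩` on `D`, and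
`E(G_{0⁺}u, G_{0⁺}u) ≤ C_P ‖u‖²`. -/
theorem stmt14 {H : Type*} [NormedAddCommGroup H] [InnerProductSpace ℝ H] [CompleteSpace H]
    (D : Submodule ℝ H) (hD : Dense (D : Set H))
    (Ef : H → H → ℝ)
    (hsymm : ∀ u ∈ D, ∀ v ∈ D, Ef u v = Ef v u)
    (hlin : ∀ a c : ℝ, ∀ u ∈ D, ∀ v ∈ D, ∀ w ∈ D,
      Ef (a • u + c • v) w = a * Ef u w + c * Ef v w)
    (hpos : ∀ u ∈ D, 0 ≤ Ef u u)
    (hclosed : ∀ (un : ℕ → H) (u : H), (∀ n, un n ∈ D) → Tendsto un atTop (𝓝 u) →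
      (∀ ε > (0 : ℝ), ∃ N, ∀ n ≥ N, ∀ m ≥ N, Ef (un n - un m) (un n - un m) < ε) →
      u ∈ D ∧ Tendsto (fun n => Ef (un n - u) (un n - u)) atTop (𝓝 0))
    (P : ℝ → H →L[ℝ] H)
    (hsemi : ∀ s > (0 : ℝ), ∀ t > (0 : ℝ), P (s + t) = (P s).comp (P t))
    (hcontr : ∀ t > (0 : ℝ), ‖P t‖ ≤ 1)
    (hstrong : ∀ u : H, Tendsto (fun t => P t u) (𝓝[>] 0) (𝓝 u))
    (G : ℝ → H →L[ℝ] H)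
    (hres_int : ∀ δ > (0 : ℝ), ∀ u : H,
      G δ u = ∫ t in Ioi (0 : ℝ), Real.exp (-δ * t) • P t u)
    (hres_mem : ∀ δ > (0 : ℝ), ∀ u : H, G δ u ∈ D)
    (hres_eq : ∀ δ > (0 : ℝ), ∀ u : H, ∀ v ∈ D,
      Ef (G δ u) v + δ * ⟪G δ u, v⟫ = ⟪u, v⟫)
    (H₀ : Submodule ℝ H) (hH₀ : IsClosed (H₀ : Set H))
    (CP : ℝ) (hCP : 0 < CP)
    (hpoinc : ∀ t > (0 : ℝ), ∀ u ∈ H₀, ‖P t u‖ ≤ Real.exp (-t / CP) * ‖u‖) :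
    ∀ u ∈ H₀,
      Integrable (fun t => P t u) (volume.restrict (Ioi (0 : ℝ)))
        ∧ (∫ t in Ioi (0 : ℝ), P t u) ∈ D
        ∧ (∀ v ∈ D, Ef (∫ t in Ioi (0 : ℝ), P t u) v = ⟪u, v⟫)
        ∧ Ef (∫ t in Ioi (0 : ℝ), P t u) (∫ t in Ioi (0 : ℝ), P t u) ≤ CP * ‖u‖ ^ 2 := by
  intro u hu
  have hbpos : 0 < 1/CP := by positivity
  -- the dominating function
  set g : ℝ → ℝ := fun t => Real.exp (-(1/CP) * t) * ‖u‖ with hg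
  have hgint : IntegrableOn g (Ioi 0) := (exp_neg_integrableOn_Ioi 0 hbpos).mul_const _
  have hgval : ∫ t in Ioi (0:ℝ), g t = CP * ‖u‖ := by
    rw [hg, MeasureTheory.integral_mul_const]
    have h0 := integral_comp_mul_left_Ioi (fun x => Real.exp (-x)) 0 hbpos
    simp only [mul_zero, integral_exp_neg_Ioi, neg_zero, Real.exp_zero, smul_eq_mul, mul_one,
      one_div, inv_inv] at h0
    simp only [one_div, neg_mul]
    rw [h0]
  have hpoinc' : ∀ t ∈ Ioi (0:ℝ), ‖P t u‖ ≤ g t := by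
    intro t ht
    have h := hpoinc t ht u hu
    have : -t / CP = -(1/CP) * t := by ring
    rwa [this] at h
  -- continuity of the orbit on (0, ∞)
  have key : ∀ s > (0:ℝ), ∀ r > (0:ℝ), ∀ w : H, ‖P (s+r) w - P s w‖ ≤ ‖P r w - w‖ := by
    intro s hs r hr w
    rw [hsemi s hs r hr]
    calc ‖(P s).comp (P r) w - P s w‖ = ‖P s (P r w - w)‖ := by
          simp [ContinuousLinearMap.comp_apply, map_sub]
      _ ≤ ‖P s‖ * ‖P r w - w‖ := (P s).le_opNorm _
      _ ≤ 1 * ‖P r w - w‖ := mul_le_mul_of_nonneg_right (hcontr s hs) (norm_nonneg _)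
      _ = ‖P r w - w‖ := one_mul _
  have hcont : ContinuousOn (fun t => P t u) (Ioi (0:ℝ)) := by
    intro t₀ ht₀
    rw [Metric.continuousWithinAt_iff]
    intro ε hε
    obtain ⟨η, hη, hηε⟩ := (Metric.tendsto_nhdsWithin_nhds).mp (hstrong u) ε hε
    refine ⟨min η t₀, lt_min hη ht₀, ?_⟩
    intro t ht hdist
    rcases lt_trichotomy t t₀ with hlt | heq | hgt
    · have h1 : 0 < t₀ - t := by linarith
      have h2 : ‖P (t + (t₀ - t)) u - P t u‖ ≤ ‖P (t₀ - t) u - u‖ := key t ht _ h1 u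
      rw [add_sub_cancel] at h2
      have hd' : |t - t₀| < min η t₀ := by rwa [Real.dist_eq] at hdist
      have h3 : dist (P (t₀ - t) u) u < ε := by
        apply hηε (mem_Ioi.mpr h1)
        rw [Real.dist_eq, sub_zero, abs_of_pos h1]
        have := abs_lt.mp (hd'.trans_le (min_le_left _ _))
        linarith [this.1]
      rw [dist_eq_norm] at h3 ⊢
      calc ‖P t u - P t₀ u‖ = ‖P t₀ u - P t u‖ := (norm_sub_rev _ _)
        _ ≤ ‖P (t₀ - t) u - u‖ := h2
        _ < ε := h3
    · rw [heq]; simpa using hε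
    · have h1 : 0 < t - t₀ := by linarith
      have h2 : ‖P (t₀ + (t - t₀)) u - P t₀ u‖ ≤ ‖P (t - t₀) u - u‖ := key t₀ ht₀ _ h1 u
      rw [add_sub_cancel] at h2
      have hd' : |t - t₀| < min η t₀ := by rwa [Real.dist_eq] at hdist
      have h3 : dist (P (t - t₀) u) u < ε := by
        apply hηε (mem_Ioi.mpr h1)
        rw [Real.dist_eq, sub_zero, abs_of_pos h1]
        have := abs_lt.mp (hd'.trans_le (min_le_left _ _))
        linarith [this.2]
      rw [dist_eq_norm] at h3 ⊢
      exact lt_of_le_of_lt h2 h3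
  have hmeas : AEStronglyMeasurable (fun t => P t u) (volume.restrict (Ioi (0:ℝ))) :=
    hcont.aestronglyMeasurable measurableSet_Ioi
  -- integrability of the orbit
  have hfint : Integrable (fun t => P t u) (volume.restrict (Ioi (0:ℝ))) := by
    refine Integrable.mono' hgint hmeas ?_
    filter_upwards [ae_restrict_mem measurableSet_Ioi] with t ht
    exact hpoinc' t ht
  set S : H := ∫ t in Ioi (0:ℝ), P t u with hS
  -- the resolvent integrands
  have hFbound : ∀ δ > (0:ℝ), ∀ t ∈ Ioi (0:ℝ), ‖Real.exp (-δ * t) • P t u‖ ≤ g t := by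
    intro δ hδ t ht
    rw [norm_smul, Real.norm_eq_abs, abs_of_pos (Real.exp_pos _)]
    calc Real.exp (-δ * t) * ‖P t u‖ ≤ 1 * g t := by
          apply mul_le_mul _ (hpoinc' t ht) (norm_nonneg _) zero_le_one
          rw [Real.exp_le_one_iff]
          have : (0:ℝ) < t := ht
          nlinarith
      _ = g t := one_mul _
  have hFmeas : ∀ δ : ℝ, AEStronglyMeasurable (fun t => Real.exp (-δ * t) • P t u)
      (volume.restrict (Ioi (0:ℝ))) := by
    intro δ
    have hce : Continuous fun t : ℝ => Real.exp (-δ * t) := by fun_prop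
    exact (hce.continuousOn.smul hcont).aestronglyMeasurable measurableSet_Ioi
  -- norm bounds
  have hSnorm : ‖S‖ ≤ CP * ‖u‖ := by
    rw [hS]
    calc ‖∫ t in Ioi (0:ℝ), P t u‖ ≤ ∫ t in Ioi (0:ℝ), ‖P t u‖ :=
          norm_integral_le_integral_norm _
      _ ≤ ∫ t in Ioi (0:ℝ), g t :=
          setIntegral_mono_on hfint.norm hgint measurableSet_Ioi hpoinc'
      _ = CP * ‖u‖ := hgval
  have hGnorm : ∀ δ > (0:ℝ), ‖G δ u‖ ≤ CP * ‖u‖ := by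
    intro δ hδ
    rw [hres_int δ hδ u]
    calc ‖∫ t in Ioi (0:ℝ), Real.exp (-δ * t) • P t u‖
        ≤ ∫ t in Ioi (0:ℝ), ‖Real.exp (-δ * t) • P t u‖ := norm_integral_le_integral_norm _
      _ ≤ ∫ t in Ioi (0:ℝ), g t := by
          apply setIntegral_mono_on _ hgint measurableSet_Ioi (hFbound δ hδ)
          refine (Integrable.mono' hgint (hFmeas δ) ?_).norm
          filter_upwards [ae_restrict_mem measurableSet_Ioi] with t ht
          exact hFbound δ hδ t ht
      _ = CP * ‖u‖ := hgval
  -- approximating sequence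
  set δseq : ℕ → ℝ := fun n => 1 / (n + 1) with hδseq
  have hδpos : ∀ n, 0 < δseq n := fun n => by positivity
  have hδto0 : Tendsto δseq atTop (𝓝 0) := tendsto_one_div_add_atTop_nhds_zero_nat
  set un : ℕ → H := fun n => G (δseq n) u with hun
  have hmem : ∀ n, un n ∈ D := fun n => hres_mem _ (hδpos n) u
  -- convergence un → S
  have hunS : Tendsto un atTop (𝓝 S) := by
    have h := tendsto_integral_of_dominated_convergence (μ := volume.restrict (Ioi (0:ℝ)))
      (F := fun n t => Real.exp (-(δseq n) * t) • P t u) (f := fun t => P t u) g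
      (fun n => hFmeas _) hgint
      (fun n => by
        filter_upwards [ae_restrict_mem measurableSet_Ioi] with t ht
        exact hFbound _ (hδpos n) t ht)
      (by
        filter_upwards [ae_restrict_mem measurableSet_Ioi] with t ht
        have h1 : Tendsto (fun n => -(δseq n) * t) atTop (𝓝 0) := by
          simpa using (hδto0.neg.mul_const t)
        have h2 : Tendsto (fun n => Real.exp (-(δseq n) * t)) atTop (𝓝 1) := by
          simpa using h1.rexp
        have h3 := h2.smul_const (P t u)
        rw [one_smul] at h3
        exact h3)
    have heq : ∀ n, un n = ∫ t in Ioi (0:ℝ), Real.exp (-(δseq n) * t) • P t u :=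
      fun n => hres_int _ (hδpos n) u
    rw [hS]
    exact Tendsto.congr (fun n => (heq n).symm) h
  -- resolvent equation in subtracted form
  have r : ∀ d > (0:ℝ), ∀ v ∈ D, Ef (G d u) v = ⟪u, v⟫ - d * ⟪G d u, v⟫ := by
    intro d hd v hv
    have := hres_eq d hd u v hv
    linarith
  -- linearity in subtracted form
  have hsub : ∀ a ∈ D, ∀ c ∈ D, ∀ w ∈ D, Ef (a - c) w = Ef a w - Ef c w := by
    intro a ha c hc w hw
    have h := hlin 1 (-1) a ha c hc w hw
    simpa [sub_eq_add_neg] using h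
  -- Cauchy–Schwarz for the form
  have hCS : ∀ a ∈ D, ∀ v ∈ D, (Ef a v)^2 ≤ Ef a a * Ef v v := by
    intro a ha v hv
    have hq : ∀ t : ℝ, 0 ≤ Ef a a * (t * t) + (2 * Ef a v) * t + Ef v v := by
      intro t
      have hta : t • a ∈ D := D.smul_mem t ha
      have hm : t • a + v ∈ D := D.add_mem hta hv
      have h1 : Ef (t • a + v) (t • a + v) = t * Ef a (t • a + v) + Ef v (t • a + v) := by
        have h := hlin t 1 a ha v hv _ hm
        simpa using h
      have h2 : Ef a (t • a + v) = t * Ef a a + Ef v a := by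
        rw [hsymm a ha _ hm]
        have h := hlin t 1 a ha v hv a ha
        simpa using h
      have h3 : Ef v (t • a + v) = t * Ef a v + Ef v v := by
        rw [hsymm v hv _ hm]
        have h := hlin t 1 a ha v hv v hv
        simpa using h
      have h4 := hpos _ hm
      have h5 : Ef v a = Ef a v := hsymm v hv a ha
      rw [h1, h2, h3, h5] at h4
      nlinarith [h4]
    have hd := discrim_le_zero hq
    rw [discrim] at hd
    nlinarith [hd]
  -- the Cauchy estimate
  have hEbound : ∀ n m, Ef (un n - un m) (un n - un m)
      ≤ (δseq n + δseq m) * (CP * ‖u‖)^2 := by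
    intro n m
    set a := un n with hadef
    set c := un m with hcdef
    have ha : a ∈ D := hmem n
    have hc : c ∈ D := hmem m
    have hac : a - c ∈ D := D.sub_mem ha hc
    have e1 : Ef (a - c) (a - c) = Ef a (a - c) - Ef c (a - c) := hsub a ha c hc _ hac
    have e2 : Ef a (a - c) = ⟪u, a - c⟫ - δseq n * ⟪a, a - c⟫ := r _ (hδpos n) _ hac
    have e3 : Ef c (a - c) = ⟪u, a - c⟫ - δseq m * ⟪c, a - c⟫ := r _ (hδpos m) _ hac
    have i1 : ⟪a, a - c⟫ = ⟪a, a⟫ - ⟪a, c⟫ := inner_sub_right a a c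
    have i2 : ⟪c, a - c⟫ = ⟪c, a⟫ - ⟪c, c⟫ := inner_sub_right c a c
    have i3 : ⟪c, a⟫ = ⟪a, c⟫ := real_inner_comm a c
    have hna : ‖a‖ ≤ CP * ‖u‖ := hGnorm _ (hδpos n)
    have hnc : ‖c‖ ≤ CP * ‖u‖ := hGnorm _ (hδpos m)
    have hin : ⟪a, c⟫ ≤ ‖a‖ * ‖c‖ := real_inner_le_norm a c
    have hprod : ‖a‖ * ‖c‖ ≤ (CP * ‖u‖)^2 := by nlinarith [norm_nonneg a, norm_nonneg c]
    have hinK : ⟪a, c⟫ ≤ (CP * ‖u‖)^2 := le_trans hin hprod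
    have hpa : 0 ≤ ⟪a, a⟫ := real_inner_self_nonneg
    have hpc : 0 ≤ ⟪c, c⟫ := real_inner_self_nonneg
    have hδn := (hδpos n).le
    have hδm := (hδpos m).le
    have h8 := mul_le_mul_of_nonneg_left hinK hδn
    have h9 := mul_le_mul_of_nonneg_left hinK hδm
    have h10 := mul_nonneg hδn hpa
    have h11 := mul_nonneg hδm hpc
    rw [e1, e2, e3, i1, i2, i3]
    nlinarith [h8, h9, h10, h11]
  have hcauchy : ∀ ε > (0:ℝ), ∃ N, ∀ n ≥ N, ∀ m ≥ N,
      Ef (un n - un m) (un n - un m) < ε := by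
    intro ε hε
    have ht : Tendsto (fun n => δseq n * (CP * ‖u‖)^2) atTop (𝓝 0) := by
      have := hδto0.mul_const ((CP * ‖u‖)^2)
      rwa [zero_mul] at this
    have hev : ∀ᶠ n in atTop, δseq n * (CP * ‖u‖)^2 < ε / 2 :=
      ht.eventually_lt_const (by linarith)
    obtain ⟨N, hN⟩ := eventually_atTop.mp hev
    refine ⟨N, fun n hn m hm => ?_⟩
    calc Ef (un n - un m) (un n - un m) ≤ (δseq n + δseq m) * (CP * ‖u‖)^2 := hEbound n m
      _ = δseq n * (CP * ‖u‖)^2 + δseq m * (CP * ‖u‖)^2 := by ring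
      _ < ε / 2 + ε / 2 := add_lt_add (hN n hn) (hN m hm)
      _ = ε := by ring
  obtain ⟨hSD, hEconv⟩ := hclosed un S hmem hunS hcauchy
  -- part (2)
  have part2 : ∀ v ∈ D, Ef S v = ⟪u, v⟫ := by
    intro v hv
    have t1 : Tendsto (fun n => Ef (un n) v) atTop (𝓝 ⟪u, v⟫) := by
      have hb : Tendsto (fun n => δseq n * ⟪un n, v⟫) atTop (𝓝 0) := by
        apply squeeze_zero_norm (a := fun n => δseq n * (CP * ‖u‖ * ‖v‖))
        · intro n
          rw [Real.norm_eq_abs, abs_mul, abs_of_pos (hδpos n)]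
          apply mul_le_mul_of_nonneg_left _ (hδpos n).le
          calc |⟪un n, v⟫| ≤ ‖un n‖ * ‖v‖ := abs_real_inner_le_norm _ _
            _ ≤ CP * ‖u‖ * ‖v‖ :=
              mul_le_mul_of_nonneg_right (hGnorm _ (hδpos n)) (norm_nonneg v)
        · have := hδto0.mul_const (CP * ‖u‖ * ‖v‖)
          rwa [zero_mul] at this
      have heq : ∀ n, Ef (un n) v = ⟪u, v⟫ - δseq n * ⟪un n, v⟫ :=
        fun n => r _ (hδpos n) v hv
      have := (tendsto_const_nhds (x := ⟪u, v⟫) (f := atTop)).sub hb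
      rw [sub_zero] at this
      exact Tendsto.congr (fun n => (heq n).symm) this
    have t2 : Tendsto (fun n => Ef (un n) v) atTop (𝓝 (Ef S v)) := by
      have hd0 : Tendsto (fun n => Ef (un n - S) v) atTop (𝓝 0) := by
        apply squeeze_zero_norm
          (a := fun n => Real.sqrt (Ef (un n - S) (un n - S)) * Real.sqrt (Ef v v))
        · intro n
          have hdm : un n - S ∈ D := D.sub_mem (hmem n) hSD
          have h := hCS _ hdm v hv
          rw [Real.norm_eq_abs]
          have h2 : |Ef (un n - S) v| = Real.sqrt ((Ef (un n - S) v)^2) := by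
            rw [Real.sqrt_sq_eq_abs]
          rw [h2, ← Real.sqrt_mul (hpos _ hdm) (Ef v v)]
          exact Real.sqrt_le_sqrt h
        · have h6 := hEconv.sqrt
          rw [Real.sqrt_zero] at h6
          have h7 := h6.mul_const (Real.sqrt (Ef v v))
          rwa [zero_mul] at h7
      have heq : ∀ n, Ef (un n) v = Ef (un n - S) v + Ef S v := by
        intro n
        have := hsub _ (hmem n) S hSD v hv
        linarith
      have := hd0.add (tendsto_const_nhds (x := Ef S v) (f := atTop))
      rw [zero_add] at this
      exact Tendsto.congr (fun n => (heq n).symm) this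
    exact tendsto_nhds_unique t2 t1
  refine ⟨hfint, hSD, part2, ?_⟩
  -- part (3)
  have h3 : Ef S S = ⟪u, S⟫ := part2 S hSD
  have h4 : ⟪u, S⟫ ≤ ‖u‖ * ‖S‖ := real_inner_le_norm u S
  rw [h3]
  calc ⟪u, S⟫ ≤ ‖u‖ * ‖S‖ := h4
    _ ≤ ‖u‖ * (CP * ‖u‖) := mul_le_mul_of_nonneg_left hSnorm (norm_nonneg u)
    _ = CP * ‖u‖ ^ 2 := by ring
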